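/- arXiv:2110.09340 — 3 statements merged into one kernel-verified Lean document; each statement's English description precedes it below -/
import Mathlib

section
/- Let (k,m) ∈ ℕ × ℕ* and let m' ∈ ℕ* divide both k and m (so that ℳ_{0,m'} ⊆ ℳ_{k,m}). For i ≥ 1, define α_i = ω_i − ω_{i+m'} ∈ ℳ_{k,m}^*. Then the annihilator ℳ_{0,m'}^0 = {ω ∈ ℳ_{k,m}^* : ω vanishes identically on ℳ_{0,m'}} equals the span of {α_i : 1 ≤ i ≤ k+m}. -/
noncomputable section

/-- Model of the space `𝓔 = ℂ^{ℕ*}` of complex sequences `(x_i)_{i ≥ 1}`: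
functions `ℕ → ℂ` with a dummy coordinate `x 0` which encodes the convention `x₀ := 0`. -/
abbrev Eseq : Type := ℕ → ℂ

/-- The submodule of `ℕ → ℂ` corresponding to `𝓔` (dummy coordinate `0` vanishes). -/
def E0 : Submodule ℂ Eseq where
  carrier := {x | x 0 = 0}
  add_mem' := by
    rintro a b ha hb
    simp only [Set.mem_setOf_eq, Pi.add_apply] at *
    rw [ha, hb]; ring
  zero_mem' := rfl
  smul_mem' := by
    rintro c a ha
    simp only [Set.mem_setOf_eq, Pi.smul_apply] at *
    rw [ha, smul_zero]

/-- `𝓛`: the subspace of constant sequences. -/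
def Lconst : Submodule ℂ Eseq where
  carrier := {x | x 0 = 0 ∧ ∀ i, 1 ≤ i → x i = x 1}
  add_mem' := by
    rintro a b ⟨ha0, ha⟩ ⟨hb0, hb⟩
    exact ⟨by simp [ha0, hb0], fun i hi => by simp only [Pi.add_apply, ha i hi, hb i hi]⟩
  zero_mem' := ⟨rfl, fun i _ => rfl⟩
  smul_mem' := by
    rintro c a ⟨ha0, ha⟩
    exact ⟨by simp [ha0], fun i hi => by simp only [Pi.smul_apply, ha i hi]⟩

/-- `ℋ_{k,m} = {x ∈ 𝓔 : β x_{k+m} − x_k = 0}` (convention `x₀ := 0`). -/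
def Hspace (β : ℂ) (k m : ℕ) : Submodule ℂ Eseq where
  carrier := {x | x 0 = 0 ∧ β * x (k + m) - x k = 0}
  add_mem' := by
    rintro a b ⟨ha0, ha⟩ ⟨hb0, hb⟩
    refine ⟨by simp [ha0, hb0], ?_⟩
    simp only [Pi.add_apply]
    linear_combination ha + hb
  zero_mem' := ⟨rfl, by simp⟩
  smul_mem' := by
    rintro c a ⟨ha0, ha⟩
    refine ⟨by simp [ha0], ?_⟩
    simp only [Pi.smul_apply, smul_eq_mul]
    linear_combination c * ha

/-- `𝓟_{k,m} = {x ∈ 𝓔 : x_{i+m} = x_i for all i ≥ k+1}`. -/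
def Pspace (k m : ℕ) : Submodule ℂ Eseq where
  carrier := {x | x 0 = 0 ∧ ∀ i, k + 1 ≤ i → x (i + m) = x i}
  add_mem' := by
    rintro a b ⟨ha0, ha⟩ ⟨hb0, hb⟩
    exact ⟨by simp [ha0, hb0], fun i hi => by simp only [Pi.add_apply, ha i hi, hb i hi]⟩
  zero_mem' := ⟨rfl, fun i _ => rfl⟩
  smul_mem' := by
    rintro c a ⟨ha0, ha⟩
    exact ⟨by simp [ha0], fun i hi => by simp only [Pi.smul_apply, ha i hi]⟩

/-- `ℳ_{k,m} = 𝓟_{k,m} ∩ ℋ_{k,m}`. -/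
def Mspace (β : ℂ) (k m : ℕ) : Submodule ℂ Eseq := Pspace k m ⊓ Hspace β k m

/-- `Q : 𝓔 → 𝓔`, `Q(x)_1 = 0`, `Q(x)_i = x_{i-1}^d` for `i ≥ 2`. -/
def Qmap (d : ℕ) (x : Eseq) : Eseq := fun i => if 2 ≤ i then (x (i - 1)) ^ d else 0

/-- The constant subtracted by the projection `π_{k,m}` onto `ℋ_{k,m}` parallel to `𝓛`. -/
def kappa (β : ℂ) (k m : ℕ) (x : Eseq) : ℂ :=
  if k = 0 then x m else (β * x (k + m) - x k) / (β - 1)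

/-- `π_{k,m} : 𝓔 → 𝓔`, the projection onto `ℋ_{k,m}` parallel to `𝓛`. -/
def projH (β : ℂ) (k m : ℕ) (x : Eseq) : Eseq :=
  fun i => if i = 0 then 0 else x i - kappa β k m x

/-- `F_{k,m} = π_{k,m} ∘ Q`. -/
def Fmap (β : ℂ) (d k m : ℕ) (x : Eseq) : Eseq := projH β k m (Qmap d x)

/-- The coordinate linear form `ω_i` on `ℳ_{k,m}`. -/
def omegaForm (β : ℂ) (k m : ℕ) (i : ℕ) : Module.Dual ℂ (Mspace β k m) where
  toFun v := (v : Eseq) i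
  map_add' a b := rfl
  map_smul' c a := rfl

/-- `L` is the derivative `D_x F_{k,m} : ℳ_{k,m} → ℳ_{k,m}` of `F_{k,m}` at `x`:
in every direction `v ∈ ℳ_{k,m}` and coordinate `i`, `L v` is the derivative at `t = 0`
of `t ↦ F_{k,m}(x + t v)_i`. -/
def IsDerivAt (β : ℂ) (d k m : ℕ) (x : Eseq)
    (L : Mspace β k m →ₗ[ℂ] Mspace β k m) : Prop :=
  ∀ v : Mspace β k m, ∀ i : ℕ,
    ((L v : Eseq) i) = deriv (fun t : ℂ => Fmap β d k m (x + t • (v : Eseq)) i) 0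

/-- The critical set `C(F_{k,m})`: points of `ℳ_{k,m}` where the derivative is not invertible. -/
def CsetD (β : ℂ) (d k m : ℕ) : Set Eseq :=
  {x | x ∈ Mspace β k m ∧
    ∀ L : Mspace β k m →ₗ[ℂ] Mspace β k m, IsDerivAt β d k m x L → ¬ Function.Bijective L}

/-- The post-critical set `PC(F_{k,m}) = ⋃_{j ≥ 1} F_{k,m}^{∘j}(C(F_{k,m}))`. -/
def PCsetD (β : ℂ) (d k m : ℕ) : Set Eseq :=
  ⋃ j : ℕ, ⋃ _ : 1 ≤ j, (Fmap β d k m)^[j] '' CsetD β d k m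

/-- `Δ_{k,m} = {x ∈ ℳ_{k,m} : x_i = x_j for some 1 ≤ i < j ≤ k+m}`. -/
def Delta (β : ℂ) (k m : ℕ) : Set Eseq :=
  {x | x ∈ Mspace β k m ∧ ∃ i j : ℕ, 1 ≤ i ∧ i < j ∧ j ≤ k + m ∧ x i = x j}

/-- Coordinates of a point of `ℂ^n`, indexed from `1` to `n`, with the convention `x₀ := 0`
(and value `0` out of range). -/
def coordFin {n : ℕ} (x : Fin n → ℂ) (i : ℕ) : ℂ :=
  if h : 1 ≤ i ∧ i ≤ n then x ⟨i - 1, by omega⟩ else 0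

/-- The Koch map `G_{k,m} : ℂ^{k+m-1} → ℂ^{k+m-1}`. -/
def Gmap (β : ℂ) (d k m : ℕ) (x : Fin (k + m - 1) → ℂ) : Fin (k + m - 1) → ℂ :=
  if k = 0 then
    fun j => (coordFin x j.1) ^ d - (coordFin x (m - 1)) ^ d
  else
    fun j =>
      (coordFin x j.1 - (β * coordFin x (k + m - 1) - coordFin x (k - 1)) / (β - 1)) ^ d

/-- The critical set `C(G_{k,m})`: points where the derivative is not invertible. -/
def Gcrit (β : ℂ) (d k m : ℕ) : Set (Fin (k + m - 1) → ℂ) :=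
  {z | ¬ Function.Bijective (fderiv ℂ (Gmap β d k m) z)}

/-- The post-critical set `PC(G_{k,m}) = ⋃_{j ≥ 1} G_{k,m}^{∘j}(C(G_{k,m}))`. -/
def GPC (β : ℂ) (d k m : ℕ) : Set (Fin (k + m - 1) → ℂ) :=
  ⋃ j : ℕ, ⋃ _ : 1 ≤ j, (Gmap β d k m)^[j] '' Gcrit β d k m

/-- The polynomial `P_z` associated to a point `z ∈ ℂ^{k+m-1}`. -/
def Ppoly (β : ℂ) (d k m : ℕ) (z : Fin (k + m - 1) → ℂ) : ℂ → ℂ :=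
  if k = 0 then fun t => t ^ d - (coordFin z (m - 1)) ^ d
  else fun t => (t - (β * coordFin z (k + m - 1) - coordFin z (k - 1)) / (β - 1)) ^ d

/- A sequence of `ℳ_{k,m}` on which every `α_i` with `i ≤ k + m` vanishes is
`m'`-periodic on all of `ℕ*`: beyond index `k + m` the `m`-periodicity of `ℳ_{k,m}` propagates the
relation `x_{i+m'} = x_i` downwards. Since `m'` divides `k` and `k + m`, periodicity turns the
defining relation of `ℋ_{k,m}` into `(β - 1) x_{m'} = 0` (or `β x_{m'} = 0` when `k = 0`), so the
sequence lies in `ℋ_{0,m'}`. Thus `ℳ_{0,m'}` is cut out of `ℳ_{k,m}` by finitely many forms `α_i`,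
and in a vector space the annihilator of the common kernel of finitely many forms is their span. -/

theorem Subspace.dualAnnihilator_eq_span_of_mem_iff {K V : Type*} [Field K] [AddCommGroup V]
    [Module K V] {W : Subspace K V} {s : Set (Module.Dual K V)} (hs : s.Finite)
    (hW : ∀ v, v ∈ W ↔ ∀ f ∈ s, f v = 0) :
    W.dualAnnihilator = Submodule.span K s := by
  have : FiniteDimensional K (Submodule.span K s) := FiniteDimensional.span_of_finite K hs
  have hcoann : (Submodule.span K s).dualCoannihilator = W := by
    ext v
    rw [← SetLike.mem_coe, Submodule.coe_dualCoannihilator_span, hW]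
    rfl
  rw [← hcoann, Subspace.dualCoannihilator_dualAnnihilator_eq]

section Shift

variable {α : Type*} {x : ℕ → α}

theorem shift_eq_of_shift_eq_on_Icc {k m p : ℕ} (hm : 0 < m)
    (hper : ∀ i, k + 1 ≤ i → x (i + m) = x i)
    (hloc : ∀ i ∈ Set.Icc 1 (k + m), x (i + p) = x i) :
    ∀ i, 1 ≤ i → x (i + p) = x i := by
  intro i
  induction i using Nat.strong_induction_on with
  | _ i ih =>
    intro hi
    by_cases hle : i ≤ k + m
    · exact hloc i ⟨hi, hle⟩
    obtain ⟨j, rfl⟩ : ∃ j, i = j + m := ⟨i - m, by omega⟩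
    calc x (j + m + p) = x (j + p + m) := by rw [Nat.add_right_comm]
      _ = x (j + p) := hper _ (by omega)
      _ = x j := ih j (by omega) (by omega)
      _ = x (j + m) := (hper j (by omega)).symm

theorem apply_eq_of_dvd_of_shift_eq {p n : ℕ} (hp : 0 < p)
    (hx : ∀ i, 1 ≤ i → x (i + p) = x i) (hpn : p ∣ n) (hn : 0 < n) : x n = x p := by
  obtain ⟨c, rfl⟩ := hpn
  obtain ⟨c, rfl⟩ := Nat.exists_eq_succ_of_ne_zero (Nat.pos_of_mul_pos_left hn).ne'
  have hperiodic : Function.Periodic (fun j => x (j + p)) p := fun j => hx _ (by omega)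
  simpa [Nat.mul_succ, Nat.mul_comm] using hperiodic.nat_mul_eq c

end Shift

theorem mem_Mspace_zero_iff_of_mem {β : ℂ} {k m p : ℕ} (hβ : β ≠ 1) (hm : 0 < m) (hp : 0 < p)
    (hk : p ∣ k) (hmp : p ∣ m) {x : Eseq} (hx : x ∈ Mspace β k m) :
    x ∈ Mspace β 0 p ↔ ∀ i ∈ Set.Icc 1 (k + m), x (i + p) = x i := by
  obtain ⟨⟨hx0, hper⟩, -, hH⟩ := hx
  constructor
  · rintro ⟨⟨-, hperp⟩, -⟩ i hi
    exact hperp i hi.1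
  intro hloc
  have hperp := shift_eq_of_shift_eq_on_Icc hm hper hloc
  have hsum : x (k + m) = x p := apply_eq_of_dvd_of_shift_eq hp hperp (dvd_add hk hmp) (by omega)
  have hβx : β * x p = 0 := by
    rcases Nat.eq_zero_or_pos k with rfl | hk0
    · rwa [hsum, hx0, sub_zero] at hH
    have hxk : x k = x p := apply_eq_of_dvd_of_shift_eq hp hperp hk hk0
    have : (β - 1) * x p = 0 := by
      rw [hsum, hxk] at hH
      linear_combination hH
    rw [(mul_eq_zero.mp this).resolve_left (sub_ne_zero.mpr hβ), mul_zero]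
  exact ⟨⟨hx0, hperp⟩, hx0, by simp [hx0, hβx]⟩

theorem stmt17_general (β : ℂ) (hβ1 : β ≠ 1)
    (k m m' : ℕ) (hm : 1 ≤ m) (hm' : 1 ≤ m') (hk : m' ∣ k) (hmm : m' ∣ m) :
    ((Mspace β 0 m').comap (Mspace β k m).subtype).dualAnnihilator =
      Submodule.span ℂ
        ((fun i => omegaForm β k m i - omegaForm β k m (i + m')) '' (Set.Icc 1 (k + m))) := by
  refine Subspace.dualAnnihilator_eq_span_of_mem_iff ((Set.finite_Icc _ _).image _) fun v => ?_
  rw [Submodule.mem_comap, Submodule.subtype_apply,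
    mem_Mspace_zero_iff_of_mem hβ1 hm hm' hk hmm v.2, Set.forall_mem_image]
  refine forall₂_congr fun i _ => ?_
  rw [LinearMap.sub_apply, sub_eq_zero, eq_comm]
  rfl

/-- the annihilator of `ℳ_{0,m'}` in `ℳ_{k,m}^*` is spanned by the forms
`α_i = ω_i − ω_{i+m'}`, `1 ≤ i ≤ k+m`. -/
theorem stmt17 (d : ℕ) (hd : 2 ≤ d) (β : ℂ) (hβd : β ^ d = 1) (hβ1 : β ≠ 1)
    (k m m' : ℕ) (hm : 1 ≤ m) (hm' : 1 ≤ m') (hk : m' ∣ k) (hmm : m' ∣ m) :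
    ((Mspace β 0 m').comap (Mspace β k m).subtype).dualAnnihilator =
      Submodule.span ℂ
        ((fun i => omegaForm β k m i - omegaForm β k m (i + m')) '' (Set.Icc 1 (k + m))) :=
  stmt17_general β hβ1 k m m' hm hm' hk hmm
end
end

section
/- Let (k,m) ∈ ℕ × ℕ* and let z ∈ ℳ_{k,m} be a fixed point of F_{k,m} whose sequence is preperiodic of exact type (0,m') with (0,m') ≺ (k,m). Then the restriction of the transpose (D_z F_{k,m})^* to the annihilator ℳ_{0,m'}^0 is nilpotent; equivalently, its spectrum is {0}. Moreover, with α_i = ω_i − ω_{i+m'} and δ_i = d·z_i^{d−1}, one has (D_z F_{k,m})^* α_1 = 0 and (D_z F_{k,m})^* α_i = δ_{i−1}·α_{i−1} for all i ≥ 2. -/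
noncomputable section

/-! At a fixed point `z` of period `m'`, the coordinates of `D_z F_{k,m}` are
`(L v)_i = δ_{i-1} v_{i-1} - κ'(v)`, with the same correction `κ'(v)` (coming from the
projection) in every coordinate, so on the forms `α_i = ω_i - ω_{i+m'}` the correction cancels
and `L^* α_i = δ_{i-1} α_{i-1}`. The fixed-point equations at the coordinates `1` and `1 + m'`
give `z_{m'}^d = 0`, so `δ_{m'} = 0` and `L^* α_1 = 0`: the transpose is a weighted shift
ending at `0`, hence `α_i ∘ L^n = 0` for `n ≥ i`.

A point `x ∈ ℳ_{k,m}` on which `α_1, …, α_{k+m}` vanish lies in `ℳ_{0,m'}`: its `m`-periodicity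
after `k` propagates `x_{i+m'} = x_i` to all `i ≥ 1`, and then `m' ∣ m`, `m' ∣ k` turn the
relation of `ℋ_{k,m}` into `β x_{m'} = 0`. So `L^{k+m}` maps `ℳ_{k,m}` into `ℳ_{0,m'}`, and
`(L^*)^{k+m}` kills its annihilator. -/

theorem LinearMap.dualMap_pow_apply {R M : Type*} [CommSemiring R] [AddCommMonoid M]
    [Module R M] (f : Module.End R M) (n : ℕ) (ω : Module.Dual R M) :
    (f.dualMap ^ n) ω = ω ∘ₗ f ^ n := by
  induction n generalizing ω with
  | zero => rfl
  | succ n ih => rw [pow_succ, Module.End.mul_apply, ih, pow_succ']; rfl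

theorem Module.End.eq_zero_of_apply_eq_smul_of_pow_apply_eq_zero {K V : Type*} [Field K]
    [AddCommGroup V] [Module K V] {f : Module.End K V} {μ : K} {x : V} {n : ℕ}
    (hx : x ≠ 0) (hfx : f x = μ • x) (hn : (f ^ n) x = 0) : μ = 0 := by
  have hvec : f.HasEigenvector μ x := hasEigenvector_iff.mpr ⟨mem_eigenspace_iff.mpr hfx, hx⟩
  rw [hvec.pow_apply] at hn
  exact eq_zero_of_pow_eq_zero ((smul_eq_zero.mp hn).resolve_right hx)

theorem LinearMap.dualMap_pow_apply_eq_zero_of_shift {R M : Type*} [CommSemiring R]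
    [AddCommMonoid M] [Module R M] (f : Module.End R M) (a : ℕ → Module.Dual R M) (c : ℕ → R)
    (h_zero : f.dualMap (a 0) = 0) (h_succ : ∀ i, f.dualMap (a (i + 1)) = c i • a i)
    {i n : ℕ} (hin : i < n) : (f.dualMap ^ n) (a i) = 0 := by
  obtain ⟨n, rfl⟩ := Nat.exists_eq_add_one_of_ne_zero (Nat.ne_zero_of_lt hin)
  rw [pow_succ, Module.End.mul_apply]
  cases i with
  | zero => rw [h_zero, map_zero]
  | succ i =>
    rw [h_succ, map_smul,
      dualMap_pow_apply_eq_zero_of_shift f a c h_zero h_succ (Nat.succ_lt_succ_iff.mp hin),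
      smul_zero]

section Periodic

variable {x : Eseq} {p : ℕ}

theorem apply_eq_of_periodic_of_dvd (hx : ∀ i, 1 ≤ i → x (i + p) = x i) {q : ℕ}
    (hpq : p ∣ q) (hq : q ≠ 0) : x q = x p := by
  obtain ⟨u, rfl⟩ := hpq
  induction u with
  | zero => simp at hq
  | succ u ih =>
    rcases Nat.eq_zero_or_pos u with rfl | hu
    · rw [zero_add, mul_one]
    · have hpu : p * u ≠ 0 := mul_ne_zero (left_ne_zero_of_mul hq) hu.ne'
      rw [mul_add_one, hx _ (Nat.one_le_iff_ne_zero.mpr hpu), ih hpu]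

theorem mem_Pspace_zero_of_periodic_le {k m : ℕ} (hm : 0 < m) (hx : x ∈ Pspace k m)
    (hper : ∀ i, 1 ≤ i → i ≤ k + m → x (i + p) = x i) : x ∈ Pspace 0 p := by
  refine ⟨hx.1, fun i hi => ?_⟩
  induction i using Nat.strong_induction_on with
  | _ i ih =>
    by_cases hik : i ≤ k + m
    · exact hper i hi hik
    · have hi_m := hx.2 (i - m) (by omega)
      have hip_m := hx.2 (i - m + p) (by omega)
      rw [Nat.sub_add_cancel (by omega)] at hi_m
      rw [show i - m + p + m = i + p by omega] at hip_m
      rw [hip_m, ih (i - m) (by omega) (by omega), hi_m]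

theorem mem_Hspace_zero_of_periodic {β : ℂ} {k m : ℕ} (hβ : β ≠ 1) (hm : 0 < m)
    (hpm : p ∣ m) (hpk : 0 = k ∨ p ∣ k) (hx : x ∈ Hspace β k m)
    (hper : ∀ i, 1 ≤ i → x (i + p) = x i) : x ∈ Hspace β 0 p := by
  obtain ⟨hx0, hH⟩ := hx
  refine ⟨hx0, ?_⟩
  rw [zero_add, hx0, sub_zero]
  rcases Nat.eq_zero_or_pos k with rfl | hk
  · rwa [zero_add, hx0, sub_zero, apply_eq_of_periodic_of_dvd hper hpm hm.ne'] at hH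
  · have hpk : p ∣ k := hpk.resolve_left hk.ne
    rw [apply_eq_of_periodic_of_dvd hper (dvd_add hpk hpm) (by omega),
      apply_eq_of_periodic_of_dvd hper hpk hk.ne'] at hH
    have hxp : x p = 0 :=
      (mul_eq_zero.mp (by linear_combination hH : (β - 1) * x p = 0)).resolve_left
        (sub_ne_zero.mpr hβ)
    rw [hxp, mul_zero]

theorem mem_Mspace_zero_of_periodic_le {β : ℂ} {k m : ℕ} (hβ : β ≠ 1) (hm : 0 < m)
    (hpm : p ∣ m) (hpk : 0 = k ∨ p ∣ k) (hx : x ∈ Mspace β k m)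
    (hper : ∀ i, 1 ≤ i → i ≤ k + m → x (i + p) = x i) : x ∈ Mspace β 0 p := by
  have hP : x ∈ Pspace 0 p := mem_Pspace_zero_of_periodic_le hm hx.1 hper
  exact ⟨hP, mem_Hspace_zero_of_periodic hβ hm hpm hpk hx.2 fun i hi => hP.2 i hi⟩

end Periodic

theorem apply_eq_zero_of_Fmap_eq_self {β : ℂ} {d k m p : ℕ} {z : Eseq} (hd : d ≠ 0)
    (hp : p ≠ 0) (hfix : Fmap β d k m z = z) (hper : z (1 + p) = z 1) : z p = 0 := by
  have h1 := congrFun hfix 1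
  have h2 := congrFun hfix (1 + p)
  simp only [Fmap, projH, Qmap, if_neg (by omega : 1 + p ≠ 0), if_pos (by omega : 2 ≤ 1 + p),
    Nat.add_sub_cancel_left, one_ne_zero, if_false, Nat.not_ofNat_le_one] at h1 h2
  exact pow_eq_zero_iff hd |>.mp (by linear_combination h2 - h1 + hper)

section Derivative

def derivQmap (d : ℕ) (z v : Eseq) : Eseq :=
  fun j => if 2 ≤ j then d * z (j - 1) ^ (d - 1) * v (j - 1) else 0

theorem hasDerivAt_Qmap_line (d : ℕ) (z v : Eseq) (j : ℕ) :
    HasDerivAt (fun t : ℂ => Qmap d (z + t • v) j) (derivQmap d z v j) 0 := by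
  unfold Qmap derivQmap
  split_ifs
  · have hline : HasDerivAt (fun t : ℂ => z (j - 1) + t * v (j - 1)) (v (j - 1)) 0 := by
      simpa using ((hasDerivAt_id (0 : ℂ)).mul_const (v (j - 1))).const_add (z (j - 1))
    simpa using hline.fun_pow d
  · exact hasDerivAt_const 0 0

theorem hasDerivAt_kappa_Qmap_line (β : ℂ) (d k m : ℕ) (z v : Eseq) :
    HasDerivAt (fun t : ℂ => kappa β k m (Qmap d (z + t • v)))
      (kappa β k m (derivQmap d z v)) 0 := by
  unfold kappa
  split_ifs
  · exact hasDerivAt_Qmap_line d z v m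
  · exact (((hasDerivAt_Qmap_line d z v (k + m)).const_mul β).sub
      (hasDerivAt_Qmap_line d z v k)).div_const _

theorem hasDerivAt_Fmap_line (β : ℂ) (d k m : ℕ) (z v : Eseq) {i : ℕ} (hi : i ≠ 0) :
    HasDerivAt (fun t : ℂ => Fmap β d k m (z + t • v) i)
      (derivQmap d z v i - kappa β k m (derivQmap d z v)) 0 := by
  simp only [Fmap, projH, if_neg hi]
  exact (hasDerivAt_Qmap_line d z v i).sub (hasDerivAt_kappa_Qmap_line β d k m z v)

variable {β : ℂ} {d k m : ℕ} {z : Eseq} {L : Mspace β k m →ₗ[ℂ] Mspace β k m}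

theorem IsDerivAt.apply_sub_apply (hL : IsDerivAt β d k m z L) (v : Mspace β k m) {i j : ℕ}
    (hi : i ≠ 0) (hj : j ≠ 0) :
    (L v : Eseq) i - (L v : Eseq) j = derivQmap d z v i - derivQmap d z v j := by
  rw [hL v i, hL v j, (hasDerivAt_Fmap_line β d k m z v hi).deriv,
    (hasDerivAt_Fmap_line β d k m z v hj).deriv]
  ring

theorem IsDerivAt.dualMap_omegaForm_sub {p : ℕ} (hL : IsDerivAt β d k m z L)
    (hper : ∀ i, 1 ≤ i → z (i + p) = z i) {i : ℕ} (hi : 2 ≤ i) :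
    L.dualMap (omegaForm β k m i - omegaForm β k m (i + p)) =
      ((d : ℂ) * z (i - 1) ^ (d - 1)) •
        (omegaForm β k m (i - 1) - omegaForm β k m (i - 1 + p)) := by
  ext v
  change (L v : Eseq) i - (L v : Eseq) (i + p) =
    d * z (i - 1) ^ (d - 1) * ((v : Eseq) (i - 1) - (v : Eseq) (i - 1 + p))
  rw [hL.apply_sub_apply v (by omega) (by omega)]
  simp only [derivQmap, if_pos hi, if_pos (by omega : 2 ≤ i + p),
    show i + p - 1 = i - 1 + p by omega, hper (i - 1) (by omega)]
  ring

theorem IsDerivAt.dualMap_omegaForm_one_sub {p : ℕ} (hL : IsDerivAt β d k m z L) (hd : 2 ≤ d)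
    (hp : p ≠ 0) (hzp : z p = 0) :
    L.dualMap (omegaForm β k m 1 - omegaForm β k m (1 + p)) = 0 := by
  ext v
  change (L v : Eseq) 1 - (L v : Eseq) (1 + p) = 0
  rw [hL.apply_sub_apply v one_ne_zero (by omega)]
  simp only [derivQmap, if_pos (by omega : 2 ≤ 1 + p), Nat.add_sub_cancel_left, hzp,
    zero_pow (by omega : d - 1 ≠ 0), Nat.not_ofNat_le_one, if_false]
  ring

end Derivative

theorem stmt18_general (d : ℕ) (hd : 2 ≤ d) (β : ℂ) (hβ1 : β ≠ 1)
    (k m m' : ℕ) (hm : 1 ≤ m) (hm' : 1 ≤ m')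
    (z : Eseq) (hfix : Fmap β d k m z = z)
    (hper : ∀ i, 1 ≤ i → z (i + m') = z i)
    (hprec : m' ∣ m ∧ (0 = k ∨ m' ∣ k) ∧ ((0 : ℕ), m') ≠ (k, m))
    (L : Mspace β k m →ₗ[ℂ] Mspace β k m) (hL : IsDerivAt β d k m z L) :
    (∃ n : ℕ, ∀ ω ∈ ((Mspace β 0 m').comap (Mspace β k m).subtype).dualAnnihilator,
      (L.dualMap ^ n) ω = 0) ∧
    (∀ μ : ℂ, (∃ ω ∈ ((Mspace β 0 m').comap (Mspace β k m).subtype).dualAnnihilator,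
      ω ≠ 0 ∧ L.dualMap ω = μ • ω) → μ = 0) ∧
    L.dualMap (omegaForm β k m 1 - omegaForm β k m (1 + m')) = 0 ∧
    (∀ i, 2 ≤ i → L.dualMap (omegaForm β k m i - omegaForm β k m (i + m')) =
      ((d : ℂ) * z (i - 1) ^ (d - 1)) •
        (omegaForm β k m (i - 1) - omegaForm β k m (i - 1 + m'))) := by
  have hzm' : z m' = 0 :=
    apply_eq_zero_of_Fmap_eq_self (by omega) (by omega) hfix (hper 1 le_rfl)
  have h_one := hL.dualMap_omegaForm_one_sub hd (by omega) hzm'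
  have h_succ := fun i (hi : 2 ≤ i) => hL.dualMap_omegaForm_sub hper hi
  have h_range : ∀ v, (L ^ (k + m)) v ∈ (Mspace β 0 m').comap (Mspace β k m).subtype := by
    refine fun v => mem_Mspace_zero_of_periodic_le hβ1 hm hprec.1 hprec.2.1 (Subtype.prop _)
      fun i hi hik => ?_
    have h := LinearMap.congr_fun (L.dualMap_pow_apply_eq_zero_of_shift
      (fun i => omegaForm β k m (i + 1) - omegaForm β k m (i + 1 + m'))
      (fun i => (d : ℂ) * z (i + 1) ^ (d - 1)) h_one (fun i => h_succ (i + 2) (by omega))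
      (i := i - 1) (n := k + m) (by omega)) v
    rw [LinearMap.dualMap_pow_apply] at h
    change (_ : Eseq) (i - 1 + 1) - (_ : Eseq) (i - 1 + 1 + m') = 0 at h
    rw [Nat.sub_add_cancel hi] at h
    exact (sub_eq_zero.mp h).symm
  have h_nil : ∀ ω ∈ ((Mspace β 0 m').comap (Mspace β k m).subtype).dualAnnihilator,
      (L.dualMap ^ (k + m)) ω = 0 := fun ω hω => by
    ext v
    rw [LinearMap.dualMap_pow_apply]
    exact (Submodule.mem_dualAnnihilator ω).mp hω _ (h_range v)
  exact ⟨⟨k + m, h_nil⟩, fun μ ⟨ω, hω, hne, heig⟩ =>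
    Module.End.eq_zero_of_apply_eq_smul_of_pow_apply_eq_zero hne heig (h_nil ω hω),
    h_one, h_succ⟩

/-- at a fixed point of exact type `(0,m')` with `(0,m') ≺ (k,m)`, the
restriction of the transpose `(D_z F_{k,m})^*` to the annihilator `ℳ_{0,m'}^0` is nilpotent
(equivalently, its spectrum is `{0}`); moreover `L^* α_1 = 0` and
`L^* α_i = δ_{i-1} α_{i-1}` for `i ≥ 2`, where `α_i = ω_i − ω_{i+m'}`. -/
theorem stmt18 (d : ℕ) (hd : 2 ≤ d) (β : ℂ) (hβd : β ^ d = 1) (hβ1 : β ≠ 1)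
    (k m m' : ℕ) (hm : 1 ≤ m) (hm' : 1 ≤ m')
    (z : Eseq) (hz : z ∈ Mspace β k m) (hfix : Fmap β d k m z = z)
    (hper : ∀ i, 1 ≤ i → z (i + m') = z i)
    (hexact : ∀ a b : ℕ, 1 ≤ b → (∀ i, a + 1 ≤ i → z (i + b) = z i) → m' ≤ b)
    (hprec : m' ∣ m ∧ (0 = k ∨ m' ∣ k) ∧ ((0 : ℕ), m') ≠ (k, m))
    (L : Mspace β k m →ₗ[ℂ] Mspace β k m) (hL : IsDerivAt β d k m z L) :
    (∃ n : ℕ, ∀ ω ∈ ((Mspace β 0 m').comap (Mspace β k m).subtype).dualAnnihilator,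
      (L.dualMap ^ n) ω = 0) ∧
    (∀ μ : ℂ, (∃ ω ∈ ((Mspace β 0 m').comap (Mspace β k m).subtype).dualAnnihilator,
      ω ≠ 0 ∧ L.dualMap ω = μ • ω) → μ = 0) ∧
    L.dualMap (omegaForm β k m 1 - omegaForm β k m (1 + m')) = 0 ∧
    (∀ i, 2 ≤ i → L.dualMap (omegaForm β k m i - omegaForm β k m (i + m')) =
      ((d : ℂ) * z (i - 1) ^ (d - 1)) •
        (omegaForm β k m (i - 1) - omegaForm β k m (i - 1 + m'))) :=
  stmt18_general d hd β hβ1 k m m' hm hm' z hfix hper hprec L hL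
end
end

section
/- Let (k,m) ∈ ℕ × ℕ* with k ≥ 1, and let z ∈ ℳ_{k,m} be a fixed point of F_{k,m} whose sequence is preperiodic of exact type (k,m') with m' a proper divisor of m (so (k,m') ≺ (k,m)). Let λ be the multiplier of P(t) = t^d + z_1 along the cycle of P^{∘k}(0), i.e. λ = ∏_{i=1}^{m'} P'(z_{k+i}). Then the spectrum of the restriction of the transpose (D_z F_{k,m})^* to the annihilator ℳ_{k,m'}^0 equals {μ ∈ ℂ : μ^m = λ^{m/m'} and μ^{m'} ≠ λ}; moreover this restriction is diagonalizable with simple eigenvalues. -/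
noncomputable section

/-!
Write a linear form on `ℳ_{k,m}` through its tail coefficients, `x ↦ ∑_{j<m} b_j x_{k+1+j}`.
The forms vanishing on `ℳ_{k,m'}` are exactly those with `b` `m`-periodic and orthogonal, over one
period, to every `m'`-periodic sequence. In particular `∑ b_j = 0`, so the constant subtracted by
`π_{k,m}` drops out, and `ω ↦ ω ∘ D_z F_{k,m}` becomes the weighted cyclic shift
`b ↦ (w_j b_{j+1})_j` with `w_j = P'(z_{k+1+j})`; the shift closes up cyclically because
`x_k = β x_{k+m}` and `β^d = 1`. The weights are `m'`-periodic, and nonzero because `0` is strictly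
preperiodic. An eigenvector of the shift is a multiple of `μ^j / (w_0 ⋯ w_{j-1})`; it is
`m`-periodic iff `μ^m = λ^{m/m'}`, and then orthogonal to the `m'`-periodic sequences iff
`μ^{m'} ≠ λ`. A discrete Fourier expansion over the `m` roots of `μ^m = λ^{m/m'}` shows that these
eigenvectors span.
-/

open Finset Function

lemma sum_range_mul_of_add_eq_mul {p : ℕ} {f : ℕ → ℂ} {ρ : ℂ} (hf : ∀ j, f (j + p) = ρ * f j)
    (n : ℕ) :
    ∑ j ∈ range (p * n), f j = (∑ s ∈ range n, ρ ^ s) * ∑ j ∈ range p, f j := by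
  have hshift : ∀ s j, f (p * s + j) = ρ ^ s * f j := by
    intro s j
    induction s with
    | zero => simp
    | succ s ih => rw [mul_add_one, add_right_comm, hf, ih, pow_succ]; ring
  induction n with
  | zero => simp
  | succ n ih =>
    rw [mul_add_one, sum_range_add, ih, sum_range_succ, add_mul]
    simp only [hshift, ← mul_sum]

lemma Function.Periodic.eq_of_forall_lt {α : Type*} {f g : ℕ → α} {m : ℕ} (hf : Periodic f m)
    (hg : Periodic g m) (hm : 0 < m) (h : ∀ j < m, f j = g j) : f = g :=
  funext fun j => by rw [← hf.map_mod_nat, ← hg.map_mod_nat]; exact h _ (Nat.mod_lt _ hm)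

lemma geom_sum_eq_zero_of_pow_eq_one {ρ : ℂ} {n : ℕ} (hρn : ρ ^ n = 1) (hρ1 : ρ ≠ 1) :
    ∑ s ∈ range n, ρ ^ s = 0 := by
  rw [geom_sum_eq hρ1, hρn, sub_self, zero_div]

lemma IsPrimitiveRoot.sum_sum_div_pow_pow {ζ : ℂ} {m : ℕ} (hζ : IsPrimitiveRoot ζ m) (a : ℕ → ℂ)
    {j : ℕ} (hj : j < m) : ∑ t ∈ range m, ∑ i ∈ range m, a i * (ζ ^ j / ζ ^ i) ^ t = m * a j := by
  have hζ0 : ζ ≠ 0 := hζ.ne_zero (by omega)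
  have horth : ∀ i < m, ∑ t ∈ range m, (ζ ^ j / ζ ^ i) ^ t = if i = j then (m : ℂ) else 0 := by
    intro i hi
    split_ifs with hij
    · simp [hij, div_self (pow_ne_zero j hζ0)]
    · refine geom_sum_eq_zero_of_pow_eq_one ?_ ?_
      · rw [div_pow, ← pow_mul, ← pow_mul, mul_comm j, mul_comm i, pow_mul, pow_mul,
          hζ.pow_eq_one, one_pow, one_pow, div_one]
      · rw [Ne, div_eq_one_iff_eq (pow_ne_zero i hζ0)]
        exact fun h => hij (hζ.pow_inj hj hi h).symm
  rw [sum_comm]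
  simp_rw [← mul_sum]
  rw [sum_congr rfl fun i hi => by rw [horth i (mem_range.mp hi)]]
  simp [mem_range.mpr hj, mul_comm]

section WeightedShift

variable {w : ℕ → ℂ} {p : ℕ}

def weightProd (w : ℕ → ℂ) (j : ℕ) : ℂ := ∏ i ∈ range j, w i

def wshift (w b : ℕ → ℂ) : ℕ → ℂ := fun j => w j * b (j + 1)

def shiftEigvec (w : ℕ → ℂ) (μ : ℂ) : ℕ → ℂ := fun j => μ ^ j / weightProd w j

lemma weightProd_succ (w : ℕ → ℂ) (j : ℕ) : weightProd w (j + 1) = weightProd w j * w j :=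
  prod_range_succ w j

lemma weightProd_ne_zero (hw0 : ∀ j, w j ≠ 0) (j : ℕ) : weightProd w j ≠ 0 :=
  prod_ne_zero_iff.mpr fun i _ => hw0 i

lemma weightProd_add (hw : Periodic w p) (j : ℕ) :
    weightProd w (j + p) = weightProd w j * weightProd w p := by
  induction j with
  | zero => simp [weightProd]
  | succ j ih =>
    rw [add_right_comm, weightProd_succ, ih, weightProd_succ, hw]
    ring

lemma weightProd_mul (hw : Periodic w p) (n : ℕ) : weightProd w (p * n) = weightProd w p ^ n := by
  induction n with
  | zero => simp [weightProd]
  | succ n ih => rw [mul_add_one, weightProd_add hw, ih, pow_succ]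

lemma shiftEigvec_periodic (hw0 : ∀ j, w j ≠ 0) (hw : Periodic w p) {μ : ℂ}
    (hμ : μ ^ p = weightProd w p) : Periodic (shiftEigvec w μ) p := fun j => by
  simp only [shiftEigvec, weightProd_add hw, pow_add, hμ]
  exact mul_div_mul_right _ _ (weightProd_ne_zero hw0 p)

lemma wshift_shiftEigvec (hw0 : ∀ j, w j ≠ 0) (μ : ℂ) :
    wshift w (shiftEigvec w μ) = μ • shiftEigvec w μ := by
  funext j
  simp only [wshift, shiftEigvec, weightProd_succ, Pi.smul_apply, smul_eq_mul, pow_succ]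
  field_simp [hw0 j]

lemma eq_smul_shiftEigvec (hw0 : ∀ j, w j ≠ 0) {μ : ℂ} {b : ℕ → ℂ} (hb : wshift w b = μ • b) :
    b = b 0 • shiftEigvec w μ := by
  funext j
  induction j with
  | zero => simp [shiftEigvec, weightProd]
  | succ j ih =>
    have hj := congrFun hb j
    simp only [wshift, Pi.smul_apply, smul_eq_mul, shiftEigvec] at hj ih ⊢
    rw [ih] at hj
    rw [weightProd_succ]
    field_simp [hw0 j] at hj ⊢
    linear_combination hj

lemma exists_eq_smul_of_wshift_eq_smul (hw0 : ∀ j, w j ≠ 0) {μ : ℂ} {b b' : ℕ → ℂ}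
    (hb : wshift w b = μ • b) (hb' : wshift w b' = μ • b') (hb0 : b ≠ 0) : ∃ c : ℂ, b' = c • b := by
  have h0 : b 0 ≠ 0 := fun h => hb0 (by rw [eq_smul_shiftEigvec hw0 hb, h, zero_smul])
  refine ⟨b' 0 / b 0, ?_⟩
  calc b' = b' 0 • shiftEigvec w μ := eq_smul_shiftEigvec hw0 hb'
    _ = (b' 0 / b 0) • (b 0 • shiftEigvec w μ) := by rw [smul_smul, div_mul_cancel₀ _ h0]
    _ = (b' 0 / b 0) • b := by rw [← eq_smul_shiftEigvec hw0 hb]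

def orthPeriodic (m p : ℕ) : Set (ℕ → ℂ) :=
  {b | Periodic b m ∧ ∀ g : ℕ → ℂ, Periodic g p → ∑ j ∈ range m, b j * g j = 0}

variable {n : ℕ} {μ : ℂ}

lemma shiftEigvec_mem_orthPeriodic (hw0 : ∀ j, w j ≠ 0) (hw : Periodic w p)
    (hμ : μ ^ (p * n) = weightProd w p ^ n) (hμ' : μ ^ p ≠ weightProd w p) :
    shiftEigvec w μ ∈ orthPeriodic (p * n) p := by
  have hWp := weightProd_ne_zero hw0 p
  refine ⟨shiftEigvec_periodic hw0 (mul_comm p n ▸ hw.nat_mul n) ?_, fun g hg => ?_⟩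
  · rw [hμ, weightProd_mul hw]
  set ρ := μ ^ p / weightProd w p
  have hf : ∀ j, shiftEigvec w μ (j + p) * g (j + p) = ρ * (shiftEigvec w μ j * g j) := by
    intro j
    simp only [shiftEigvec, hg j, weightProd_add hw, pow_add, ρ]
    field_simp
  rw [sum_range_mul_of_add_eq_mul hf, geom_sum_eq_zero_of_pow_eq_one, zero_mul]
  · rw [div_pow, ← pow_mul, hμ, div_self (pow_ne_zero n hWp)]
  · rwa [Ne, div_eq_one_iff_eq hWp]

lemma exists_eigen_mem_orthPeriodic_iff (hw0 : ∀ j, w j ≠ 0) (hw : Periodic w p)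
    (hpn : 0 < p * n) :
    (∃ b ∈ orthPeriodic (p * n) p, b ≠ 0 ∧ wshift w b = μ • b) ↔
      μ ^ (p * n) = weightProd w p ^ n ∧ μ ^ p ≠ weightProd w p := by
  constructor
  · rintro ⟨b, ⟨hbper, hborth⟩, hb0, hb⟩
    have hbe := eq_smul_shiftEigvec hw0 hb
    have h0 : b 0 ≠ 0 := fun h => hb0 (by rw [hbe, h, zero_smul])
    have hval : ∀ j, b j = b 0 * shiftEigvec w μ j := fun j => congrFun hbe j
    have hμ : μ ^ (p * n) = weightProd w p ^ n := by
      have h := hbper 0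
      rw [zero_add, hval (p * n)] at h
      have h1 : shiftEigvec w μ (p * n) = 1 := mul_left_cancel₀ h0 (h.trans (mul_one _).symm)
      unfold shiftEigvec at h1
      rwa [div_eq_one_iff_eq (weightProd_ne_zero hw0 _), weightProd_mul hw] at h1
    refine ⟨hμ, fun hbad => ?_⟩
    have hμ0 : μ ≠ 0 := by
      rintro rfl
      rw [zero_pow hpn.ne'] at hμ
      exact pow_ne_zero n (weightProd_ne_zero hw0 p) hμ.symm
    have he0 : ∀ j, shiftEigvec w μ j ≠ 0 := fun j =>
      div_ne_zero (pow_ne_zero j hμ0) (weightProd_ne_zero hw0 j)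
    -- `b` is a multiple of a `p`-periodic sequence; pairing it with the inverse gives `p n • b 0`
    have h := hborth _ ((shiftEigvec_periodic hw0 hw hbad).comp (·⁻¹))
    rw [sum_congr rfl fun j _ => by
      rw [hval j, Function.comp_apply, mul_assoc, mul_inv_cancel₀ (he0 j), mul_one]] at h
    simp only [sum_const, card_range, nsmul_eq_mul] at h
    exact mul_ne_zero (by exact_mod_cast hpn.ne') h0 h
  · rintro ⟨hμ, hμ'⟩
    refine ⟨_, shiftEigvec_mem_orthPeriodic hw0 hw hμ hμ', fun h => ?_, wshift_shiftEigvec hw0 μ⟩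
    simpa [shiftEigvec, weightProd] using congrFun h 0

lemma eq_sum_smul_shiftEigvec (hw0 : ∀ j, w j ≠ 0) {m : ℕ} (hwm : Periodic w m) (hm : 0 < m)
    {ζ μ₀ : ℂ} (hζ : IsPrimitiveRoot ζ m) (hμ₀ : μ₀ ^ m = weightProd w m) {b : ℕ → ℂ}
    (hb : Periodic b m) :
    b = ∑ t ∈ range m, ((m : ℂ)⁻¹ * ∑ i ∈ range m, b i * (shiftEigvec w (μ₀ * ζ ^ t) i)⁻¹) •
      shiftEigvec w (μ₀ * ζ ^ t) := by
  have hμ₀0 : μ₀ ≠ 0 := by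
    rintro rfl
    exact weightProd_ne_zero hw0 m (hμ₀.symm.trans (zero_pow hm.ne'))
  have hm0 : (m : ℂ) ≠ 0 := by exact_mod_cast hm.ne'
  have hper : ∀ t, Periodic (shiftEigvec w (μ₀ * ζ ^ t)) m := fun t =>
    shiftEigvec_periodic hw0 hwm (by
      rw [mul_pow, ← pow_mul, mul_comm t, pow_mul, hζ.pow_eq_one, one_pow, mul_one, hμ₀])
  refine hb.eq_of_forall_lt (fun j => ?_) hm fun j hj => ?_
  · simp only [Finset.sum_apply, Pi.smul_apply, hper _ j]
  have hWj := weightProd_ne_zero hw0 j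
  calc b j = (m : ℂ)⁻¹ * (μ₀ ^ j / weightProd w j) * ∑ t ∈ range m, ∑ i ∈ range m,
        b i * weightProd w i / μ₀ ^ i * (ζ ^ j / ζ ^ i) ^ t := by
        rw [hζ.sum_sum_div_pow_pow _ hj]
        field_simp
    _ = _ := by
        simp only [Finset.sum_apply, Pi.smul_apply, smul_eq_mul, shiftEigvec, mul_sum, sum_mul]
        refine sum_congr rfl fun t _ => sum_congr rfl fun i _ => ?_
        simp only [div_pow, mul_pow, ← pow_mul]
        field_simp
        ring

lemma mem_span_shiftEigvec (hw0 : ∀ j, w j ≠ 0) (hw : Periodic w p) (hpn : 0 < p * n)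
    {b : ℕ → ℂ} (hb : b ∈ orthPeriodic (p * n) p) :
    b ∈ Submodule.span ℂ
      (shiftEigvec w '' {μ | μ ^ (p * n) = weightProd w p ^ n ∧ μ ^ p ≠ weightProd w p}) := by
  have hwm : Periodic w (p * n) := by rw [mul_comm]; exact hw.nat_mul n
  rw [← weightProd_mul hw n]
  generalize p * n = m at hpn hb hwm ⊢
  obtain ⟨ζ, hζ⟩ : ∃ ζ : ℂ, IsPrimitiveRoot ζ m := ⟨_, Complex.isPrimitiveRoot_exp m hpn.ne'⟩
  obtain ⟨μ₀, hμ₀⟩ := IsAlgClosed.exists_pow_nat_eq (weightProd w m) hpn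
  rw [eq_sum_smul_shiftEigvec hw0 hwm hpn hζ hμ₀ hb.1]
  refine Submodule.sum_mem _ fun t _ => ?_
  by_cases hbad : (μ₀ * ζ ^ t) ^ p = weightProd w p
  · -- the Fourier coefficient pairs `b` with a `p`-periodic sequence
    have hc : ∑ i ∈ range m, b i * (shiftEigvec w (μ₀ * ζ ^ t) i)⁻¹ = 0 :=
      hb.2 _ ((shiftEigvec_periodic hw0 hw hbad).comp (·⁻¹))
    rw [hc, mul_zero, zero_smul]
    exact Submodule.zero_mem _
  · refine Submodule.smul_mem _ _ (Submodule.subset_span ⟨_, ⟨?_, hbad⟩, rfl⟩)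
    rw [mul_pow, ← pow_mul, mul_comm t, pow_mul, hζ.pow_eq_one, one_pow, mul_one, hμ₀]

end WeightedShift

section TailCoordinates

variable {β : ℂ} {k m p : ℕ}

lemma mem_Mspace_iff {x : Eseq} :
    x ∈ Mspace β k m ↔ x 0 = 0 ∧ (∀ i, k + 1 ≤ i → x (i + m) = x i) ∧ x k = β * x (k + m) := by
  simp only [Mspace, Submodule.mem_inf, Pspace, Hspace, Submodule.mem_mk, AddSubmonoid.mem_mk,
    AddSubsemigroup.mem_mk, Set.mem_ofPred_eq, sub_eq_zero]
  tauto

/-- The point of `ℳ_{k,m}` with vanishing head `x₁, …, x_{k-1}` and tail `x_{k+1+j} = g (j % m)`;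
the shift by `m` makes `x_k = β x_{k+m}` read `g (m - 1)`. -/
def tailSeq (β : ℂ) (k m : ℕ) : (ℕ → ℂ) →ₗ[ℂ] Eseq where
  toFun g i := if i < k then 0 else (if i = k then β else 1) * g ((i + m - (k + 1)) % m)
  map_add' g g' := by ext i; simp only [Pi.add_apply]; split_ifs <;> ring
  map_smul' c g := by
    ext i; simp only [Pi.smul_apply, smul_eq_mul, RingHom.id_apply]; split_ifs <;> ring

lemma tailSeq_apply (g : ℕ → ℂ) (i : ℕ) : tailSeq β k m g i =
    if i < k then 0 else (if i = k then β else 1) * g ((i + m - (k + 1)) % m) := rfl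

lemma tailSeq_apply_add (g : ℕ → ℂ) (j : ℕ) : tailSeq β k m g (k + 1 + j) = g (j % m) := by
  rw [tailSeq_apply, if_neg (by omega), if_neg (by omega), one_mul,
    show k + 1 + j + m - (k + 1) = j + m by omega, Nat.add_mod_right]

lemma tailSeq_congr (hm : 0 < m) {g g' : ℕ → ℂ} (h : ∀ j < m, g j = g' j) :
    tailSeq β k m g = tailSeq β k m g' := by
  ext i
  simp only [tailSeq_apply, h _ (Nat.mod_lt _ hm)]

lemma tailSeq_apply_of_le {g : ℕ → ℂ} (hg : Periodic g m) {i : ℕ} (hi : k ≤ i) :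
    tailSeq β k m g i = (if i = k then β else 1) * g (i + m - (k + 1)) := by
  rw [tailSeq_apply, if_neg (by omega), hg.map_mod_nat]

lemma tailSeq_mem (hk : 1 ≤ k) (hm : 0 < m) (hpm : p ∣ m) {g : ℕ → ℂ} (hg : Periodic g p) :
    tailSeq β k m g ∈ Mspace β k p := by
  obtain ⟨q, rfl⟩ := hpm
  have hp : 0 < p := Nat.pos_of_ne_zero fun h => by simp [h] at hm
  have hgm : Periodic g (p * q) := mul_comm q p ▸ hg.nat_mul q
  refine mem_Mspace_iff.mpr ⟨by simp [tailSeq_apply, show 0 < k by omega], fun i hi => ?_, ?_⟩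
  · rw [tailSeq_apply_of_le hgm (by omega), tailSeq_apply_of_le hgm (by omega), if_neg (by omega),
      if_neg (by omega), show i + p + p * q - (k + 1) = i + p * q - (k + 1) + p by omega, hg]
  · rw [tailSeq_apply_of_le hgm (i := k + p) (by omega), tailSeq_apply_of_le hgm le_rfl,
      if_pos rfl, if_neg (show k + p ≠ k by omega),
      show k + p + p * q - (k + 1) = k + p * q - (k + 1) + p by omega, hg, one_mul]

lemma tailSeq_tail (hm : 0 < m) {x : Eseq} (hx : x ∈ Mspace β k m) {i : ℕ} (hi : k ≤ i) :
    tailSeq β k m (fun j => x (k + 1 + j)) i = x i := by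
  obtain ⟨-, hxP, hxk⟩ := mem_Mspace_iff.mp hx
  have hper : Periodic (fun j => x (k + 1 + j)) m := fun j => by
    simp only
    rw [← add_assoc, hxP _ (by omega)]
  rw [tailSeq_apply, if_neg (by omega), hper.map_mod_nat, show k + 1 + (i + m - (k + 1)) = i + m
    by omega]
  rcases hi.eq_or_lt with rfl | hi
  · rw [if_pos rfl, hxk]
  · rw [if_neg hi.ne', one_mul, hxP _ hi]

def tailVec (hk : 1 ≤ k) (hm : 0 < m) : (ℕ → ℂ) →ₗ[ℂ] Mspace β k m :=
  (tailSeq β k m).codRestrict _ fun g => by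
    rw [tailSeq_congr hm (g' := g ∘ (· % m)) fun j hj => by simp [Nat.mod_eq_of_lt hj]]
    exact tailSeq_mem hk hm dvd_rfl ((Nat.periodic_mod m).comp g)

lemma coe_tailVec (hk : 1 ≤ k) (hm : 0 < m) (g : ℕ → ℂ) :
    (tailVec (β := β) hk hm g : Eseq) = tailSeq β k m g := rfl

lemma tailVec_eq_sum (hk : 1 ≤ k) (hm : 0 < m) (g : ℕ → ℂ) :
    tailVec (β := β) hk hm g = ∑ j ∈ range m, g j • tailVec hk hm (Pi.single j 1) := by
  simp_rw [← map_smul, ← map_sum]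
  refine Subtype.ext (tailSeq_congr hm fun i hi => ?_)
  simp [Finset.sum_apply, Pi.single_apply, mem_range.mpr hi]

def tailForm (β : ℂ) (k m : ℕ) : (ℕ → ℂ) →ₗ[ℂ] Module.Dual ℂ (Mspace β k m) :=
  LinearMap.mk₂ ℂ (fun b x => ∑ j ∈ range m, b j * (x : Eseq) (k + 1 + j))
    (fun _ _ _ => by simp only [Pi.add_apply, add_mul, sum_add_distrib])
    (fun _ _ _ => by simp only [Pi.smul_apply, smul_eq_mul, mul_sum, mul_assoc])
    (fun _ _ _ => by simp only [Submodule.coe_add, Pi.add_apply, mul_add, sum_add_distrib])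
    (fun _ _ _ => by
      simp only [Submodule.coe_smul, Pi.smul_apply, smul_eq_mul, mul_sum]
      exact sum_congr rfl fun _ _ => by ring)

lemma tailForm_apply (b : ℕ → ℂ) (x : Mspace β k m) :
    tailForm β k m b x = ∑ j ∈ range m, b j * (x : Eseq) (k + 1 + j) := rfl

lemma tailForm_tailVec (hk : 1 ≤ k) (hm : 0 < m) (b g : ℕ → ℂ) :
    tailForm β k m b (tailVec hk hm g) = ∑ j ∈ range m, b j * g j := by
  rw [tailForm_apply]
  refine sum_congr rfl fun j hj => ?_
  rw [coe_tailVec, tailSeq_apply_add, Nat.mod_eq_of_lt (mem_range.mp hj)]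

lemma tailForm_eq_zero_iff (hk : 1 ≤ k) (hm : 0 < m) {b : ℕ → ℂ} (hb : Periodic b m) :
    tailForm β k m b = 0 ↔ b = 0 := by
  refine ⟨fun h => hb.eq_of_forall_lt (fun _ => rfl) hm fun j hj => ?_,
    fun h => by rw [h, map_zero]⟩
  have := LinearMap.congr_fun h (tailVec hk hm (Pi.single j 1))
  simpa [tailForm_tailVec, Pi.single_apply, mem_range.mpr hj] using this

lemma mem_Mspace_of_eq_zero {x : Eseq} (h0 : x 0 = 0) (h : ∀ i, k ≤ i → x i = 0) :
    x ∈ Mspace β k p :=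
  mem_Mspace_iff.mpr ⟨h0, fun i hi => by rw [h i (by omega), h (i + p) (by omega)], by
    rw [h k le_rfl, h (k + p) (by omega), mul_zero]⟩

def annihilatorM (β : ℂ) (k m p : ℕ) : Submodule ℂ (Module.Dual ℂ (Mspace β k m)) :=
  ((Mspace β k p).comap (Mspace β k m).subtype).dualAnnihilator

lemma mem_annihilatorM_iff (hk : 1 ≤ k) (hm : 0 < m) (hpm : p ∣ m)
    (ω : Module.Dual ℂ (Mspace β k m)) :
    ω ∈ annihilatorM β k m p ↔ ∃ b ∈ orthPeriodic m p, tailForm β k m b = ω := by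
  simp only [annihilatorM, Submodule.mem_dualAnnihilator, Submodule.mem_comap,
    Submodule.coe_subtype]
  constructor
  · intro hω
    set b : ℕ → ℂ := fun j => ω (tailVec hk hm (Pi.single (j % m) 1))
    have hexpand : ∀ g, ω (tailVec hk hm g) = ∑ j ∈ range m, b j * g j := fun g => by
      rw [tailVec_eq_sum, map_sum]
      refine sum_congr rfl fun j hj => ?_
      rw [map_smul, smul_eq_mul, mul_comm]
      simp only [b, Nat.mod_eq_of_lt (mem_range.mp hj)]
    refine ⟨b, ⟨fun j => by simp only [b, Nat.add_mod_right], fun g hg => ?_⟩, ?_⟩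
    · rw [← hexpand]
      exact hω _ (tailSeq_mem hk hm hpm hg)
    · refine LinearMap.ext fun x => ?_
      have hx : ω (x - tailVec hk hm fun j => (x : Eseq) (k + 1 + j)) = 0 :=
        hω _ (mem_Mspace_of_eq_zero (by simp [(mem_Mspace_iff.mp x.2).1, coe_tailVec,
          tailSeq_apply, show 0 < k by omega]) fun i hi => by
            rw [Submodule.coe_sub, Pi.sub_apply, coe_tailVec, tailSeq_tail hm x.2 hi, sub_self])
      rw [map_sub, sub_eq_zero, hexpand] at hx
      rw [hx, tailForm_apply]
  · rintro ⟨b, hb, rfl⟩ x hx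
    obtain ⟨-, hxP, -⟩ := mem_Mspace_iff.mp hx
    exact hb.2 (fun j => (x : Eseq) (k + 1 + j)) fun j => by
      simp only; rw [← add_assoc, hxP _ (by omega)]

end TailCoordinates

section Derivative

variable {β : ℂ} {d k m : ℕ}

lemma hasDerivAt_Fmap_apply (x v : Eseq) (i : ℕ) :
    HasDerivAt (fun t : ℂ => Fmap β d k m (x + t • v) i)
      (projH β k m (fun j => if 2 ≤ j then (d : ℂ) * x (j - 1) ^ (d - 1) * v (j - 1) else 0) i)
      0 := by
  have hQ : ∀ j, HasDerivAt (fun t : ℂ => Qmap d (x + t • v) j)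
      (if 2 ≤ j then (d : ℂ) * x (j - 1) ^ (d - 1) * v (j - 1) else 0) 0 := fun j => by
    simp only [Qmap, Pi.add_apply, Pi.smul_apply, smul_eq_mul]
    split_ifs
    · simpa using (((hasDerivAt_id (0 : ℂ)).mul_const (v (j - 1))).const_add (x (j - 1))).fun_pow d
    · exact hasDerivAt_const _ _
  have hκ : HasDerivAt (fun t : ℂ => kappa β k m (Qmap d (x + t • v)))
      (kappa β k m fun j => if 2 ≤ j then (d : ℂ) * x (j - 1) ^ (d - 1) * v (j - 1) else 0) 0 := by
    unfold kappa
    split_ifs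
    · exact hQ m
    · exact (((hQ _).const_mul β).sub (hQ k)).div_const _
  simp only [Fmap, projH]
  by_cases hi : i = 0
  · simp only [hi, if_true]
    exact hasDerivAt_const _ _
  · simp only [hi, if_false]
    exact (hQ i).fun_sub hκ

def tailWeight (d k : ℕ) (z : Eseq) : ℕ → ℂ := fun j => (d : ℂ) * z (k + 1 + j) ^ (d - 1)

lemma dualMap_tailForm {z : Eseq} {L : Mspace β k m →ₗ[ℂ] Mspace β k m} (hk : 1 ≤ k)
    (hβd : β ^ d = 1) (hz : z ∈ Mspace β k m) (hL : IsDerivAt β d k m z L) {b : ℕ → ℂ}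
    (hb : Periodic b m) (hsum : ∑ j ∈ range m, b j = 0) :
    L.dualMap (tailForm β k m b) = tailForm β k m (wshift (tailWeight d k z) b) := by
  refine LinearMap.ext fun x => ?_
  set F : ℕ → ℂ := fun j => b j * ((d : ℂ) * z (k + j) ^ (d - 1) * (x : Eseq) (k + j))
  have hF : F m = F 0 := by
    obtain ⟨-, -, hzk⟩ := mem_Mspace_iff.mp hz
    obtain ⟨-, -, hxk⟩ := mem_Mspace_iff.mp x.2
    have hbm : b m = b 0 := by simpa using hb 0
    simp only [F, add_zero, hzk, hxk, hbm]
    rcases d with _ | d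
    · simp
    · rw [Nat.add_sub_cancel, mul_pow]
      linear_combination (-(b 0 * ((d + 1 : ℕ) : ℂ) * z (k + m) ^ d * (x : Eseq) (k + m))) * hβd
  have hLx : ∀ j, (L x : Eseq) (k + 1 + j) = (d : ℂ) * z (k + j) ^ (d - 1) * (x : Eseq) (k + j) -
      kappa β k m (fun j => if 2 ≤ j then (d : ℂ) * z (j - 1) ^ (d - 1) * (x : Eseq) (j - 1)
        else 0) := fun j => by
    rw [hL, (hasDerivAt_Fmap_apply z x _).deriv, projH, if_neg (by omega), if_pos (by omega),
      show k + 1 + j - 1 = k + j by omega]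
  calc L.dualMap (tailForm β k m b) x = ∑ j ∈ range m, F j := by
        simp only [LinearMap.dualMap_apply, tailForm_apply, hLx, mul_sub, sum_sub_distrib,
          ← sum_mul, hsum, zero_mul, sub_zero, F]
    _ = ∑ j ∈ range m, F (j + 1) := by
        have h1 := sum_range_succ F m
        have h2 := sum_range_succ' F m
        linear_combination h2 - h1 - hF
    _ = tailForm β k m (wshift (tailWeight d k z) b) x := by
        simp only [tailForm_apply, wshift, tailWeight, F]
        exact sum_congr rfl fun j _ => by rw [show k + (j + 1) = k + 1 + j by omega]; ring

end Derivative

section FixedPoint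

variable {β : ℂ} {d k m : ℕ} {z : Eseq}

lemma Fmap_fixed_succ (hfix : Fmap β d k m z = z) (hz0 : z 0 = 0) (hd : d ≠ 0) (i : ℕ) :
    z (i + 1) = z i ^ d + z 1 := by
  have hQ : ∀ i, Qmap d z (i + 1) = z i ^ d := fun i => by
    rcases i with _ | i
    · simp [Qmap, hz0, hd]
    · simp [Qmap]
  have hF : ∀ i, z (i + 1) = z i ^ d - kappa β k m (Qmap d z) := fun i => by
    conv_lhs => rw [← hfix]
    simp [Fmap, projH, hQ]
  linear_combination hF i - hF 0 + (zero_pow hd).symm.trans (congrArg (· ^ d) hz0).symm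

lemma periodic_of_eq_zero (hrec : ∀ i, z (i + 1) = z i ^ d + z 1) (hz0 : z 0 = 0) {p : ℕ}
    (hp : z p = 0) : Periodic z p := by
  intro i
  induction i with
  | zero => rw [zero_add, hp, hz0]
  | succ i ih => rw [add_right_comm, hrec, ih, hrec i]

lemma tailWeight_ne_zero (hd : d ≠ 0) (hrec : ∀ i, z (i + 1) = z i ^ d + z 1) (hz0 : z 0 = 0)
    (hnper : ∀ p, 0 < p → ¬ Periodic z p) (j : ℕ) : tailWeight d k z j ≠ 0 :=
  mul_ne_zero (Nat.cast_ne_zero.mpr hd) <| pow_ne_zero _ fun h =>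
    hnper _ (by omega) (periodic_of_eq_zero hrec hz0 h)

lemma tailWeight_periodic {p : ℕ} (hper : ∀ i, k + 1 ≤ i → z (i + p) = z i) :
    Periodic (tailWeight d k z) p := fun j => by
  simp only [tailWeight, ← add_assoc, hper _ (by omega : k + 1 ≤ k + 1 + j)]

lemma weightProd_tailWeight (p : ℕ) :
    weightProd (tailWeight d k z) p = ∏ i ∈ Icc 1 p, (d : ℂ) * z (k + i) ^ (d - 1) := by
  rw [← Finset.Ico_add_one_right_eq_Icc, Finset.prod_Ico_eq_prod_range, Nat.add_sub_cancel,
    weightProd]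
  simp only [tailWeight, add_assoc, add_comm 1]

end FixedPoint

section Transfer

variable {β : ℂ} {k p n : ℕ} {w : ℕ → ℂ} {L : Mspace β k (p * n) →ₗ[ℂ] Mspace β k (p * n)}

lemma dualMap_tailForm_eq_smul_iff (hk : 1 ≤ k) (hpn : 0 < p * n) (hw : Periodic w p)
    (hdual : ∀ b ∈ orthPeriodic (p * n) p,
      L.dualMap (tailForm β k (p * n) b) = tailForm β k (p * n) (wshift w b))
    {b : ℕ → ℂ} (hb : b ∈ orthPeriodic (p * n) p) (μ : ℂ) :
    L.dualMap (tailForm β k (p * n) b) = μ • tailForm β k (p * n) b ↔ wshift w b = μ • b := by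
  have hwm : Periodic w (p * n) := by rw [mul_comm]; exact hw.nat_mul n
  have hper : Periodic (wshift w b - μ • b) (p * n) := fun j => by
    simp only [Pi.sub_apply, Pi.smul_apply, wshift, hwm j, hb.1 j]
    rw [add_right_comm, hb.1]
  rw [hdual b hb, ← map_smul, ← sub_eq_zero, ← map_sub, tailForm_eq_zero_iff hk hpn hper,
    sub_eq_zero]

lemma eigenvalues_annihilatorM (hk : 1 ≤ k) (hpn : 0 < p * n) (hw0 : ∀ j, w j ≠ 0)
    (hw : Periodic w p) (hdual : ∀ b ∈ orthPeriodic (p * n) p,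
      L.dualMap (tailForm β k (p * n) b) = tailForm β k (p * n) (wshift w b)) :
    {μ : ℂ | ∃ ω ∈ annihilatorM β k (p * n) p, ω ≠ 0 ∧ L.dualMap ω = μ • ω} =
      {μ : ℂ | μ ^ (p * n) = weightProd w p ^ n ∧ μ ^ p ≠ weightProd w p} := by
  ext μ
  rw [Set.mem_ofPred_eq, Set.mem_ofPred_eq, ← exists_eigen_mem_orthPeriodic_iff hw0 hw hpn]
  constructor
  · rintro ⟨ω, hω, hω0, he⟩
    obtain ⟨b, hb, rfl⟩ := (mem_annihilatorM_iff hk hpn (dvd_mul_right p n) ω).1 hω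
    exact ⟨b, hb, fun h => hω0 (by rw [h, map_zero]),
      (dualMap_tailForm_eq_smul_iff hk hpn hw hdual hb μ).1 he⟩
  · rintro ⟨b, hb, hb0, he⟩
    exact ⟨_, (mem_annihilatorM_iff hk hpn (dvd_mul_right p n) _).2 ⟨b, hb, rfl⟩,
      fun h => hb0 ((tailForm_eq_zero_iff hk hpn hb.1).1 h),
      (dualMap_tailForm_eq_smul_iff hk hpn hw hdual hb μ).2 he⟩

lemma span_eigenvectors_annihilatorM (hk : 1 ≤ k) (hpn : 0 < p * n) (hw0 : ∀ j, w j ≠ 0)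
    (hw : Periodic w p) (hdual : ∀ b ∈ orthPeriodic (p * n) p,
      L.dualMap (tailForm β k (p * n) b) = tailForm β k (p * n) (wshift w b)) :
    Submodule.span ℂ {ω | ω ∈ annihilatorM β k (p * n) p ∧ ∃ μ : ℂ, L.dualMap ω = μ • ω} =
      annihilatorM β k (p * n) p := by
  refine le_antisymm (Submodule.span_le.mpr fun ω h => h.1) fun ω hω => ?_
  obtain ⟨b, hb, rfl⟩ := (mem_annihilatorM_iff hk hpn (dvd_mul_right p n) ω).1 hω
  have h := Submodule.mem_map_of_mem (f := tailForm β k (p * n))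
    (mem_span_shiftEigvec hw0 hw hpn hb)
  rw [Submodule.map_span, ← Set.image_comp] at h
  refine Submodule.span_mono ?_ h
  rintro _ ⟨μ, ⟨hμ, hμ'⟩, rfl⟩
  have he := shiftEigvec_mem_orthPeriodic hw0 hw hμ hμ'
  exact ⟨(mem_annihilatorM_iff hk hpn (dvd_mul_right p n) _).2 ⟨_, he, rfl⟩, μ,
    (dualMap_tailForm_eq_smul_iff hk hpn hw hdual he μ).2 (wshift_shiftEigvec hw0 μ)⟩

lemma eigenvectors_annihilatorM_unique (hk : 1 ≤ k) (hpn : 0 < p * n) (hw0 : ∀ j, w j ≠ 0)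
    (hw : Periodic w p) (hdual : ∀ b ∈ orthPeriodic (p * n) p,
      L.dualMap (tailForm β k (p * n) b) = tailForm β k (p * n) (wshift w b))
    {μ : ℂ} {ω₁ ω₂ : Module.Dual ℂ (Mspace β k (p * n))} (h₁ : ω₁ ∈ annihilatorM β k (p * n) p)
    (h₂ : ω₂ ∈ annihilatorM β k (p * n) p) (he₁ : L.dualMap ω₁ = μ • ω₁)
    (he₂ : L.dualMap ω₂ = μ • ω₂) (hω₁ : ω₁ ≠ 0) : ∃ c : ℂ, ω₂ = c • ω₁ := by
  obtain ⟨b₁, hb₁, rfl⟩ := (mem_annihilatorM_iff hk hpn (dvd_mul_right p n) ω₁).1 h₁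
  obtain ⟨b₂, hb₂, rfl⟩ := (mem_annihilatorM_iff hk hpn (dvd_mul_right p n) ω₂).1 h₂
  obtain ⟨c, rfl⟩ := exists_eq_smul_of_wshift_eq_smul hw0
    ((dualMap_tailForm_eq_smul_iff hk hpn hw hdual hb₁ μ).1 he₁)
    ((dualMap_tailForm_eq_smul_iff hk hpn hw hdual hb₂ μ).1 he₂)
    fun h => hω₁ (by rw [h, map_zero])
  exact ⟨c, map_smul _ _ _⟩

end Transfer

theorem stmt19_general (d : ℕ) (hd : 2 ≤ d) (β : ℂ) (hβd : β ^ d = 1)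
    (k m m' : ℕ) (hk : 1 ≤ k) (hm : 1 ≤ m) (hm' : 1 ≤ m')
    (hdvd : m' ∣ m)
    (z : Eseq) (hz : z ∈ Mspace β k m) (hfix : Fmap β d k m z = z)
    (hper : ∀ i, k + 1 ≤ i → z (i + m') = z i)
    (hexact : ∀ a b : ℕ, 1 ≤ b → (∀ i, a + 1 ≤ i → z (i + b) = z i) → k ≤ a ∧ m' ≤ b)
    (lam : ℂ) (hlam : lam = ∏ i ∈ Finset.Icc 1 m', (d : ℂ) * z (k + i) ^ (d - 1))
    (L : Mspace β k m →ₗ[ℂ] Mspace β k m) (hL : IsDerivAt β d k m z L) :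
    ({μ : ℂ | ∃ ω ∈ ((Mspace β k m').comap (Mspace β k m).subtype).dualAnnihilator,
        ω ≠ 0 ∧ L.dualMap ω = μ • ω} =
      {μ : ℂ | μ ^ m = lam ^ (m / m') ∧ μ ^ m' ≠ lam}) ∧
    (Submodule.span ℂ {ω : Module.Dual ℂ (Mspace β k m) |
        ω ∈ ((Mspace β k m').comap (Mspace β k m).subtype).dualAnnihilator ∧
        ∃ μ : ℂ, L.dualMap ω = μ • ω} =
      ((Mspace β k m').comap (Mspace β k m).subtype).dualAnnihilator) ∧
    (∀ (μ : ℂ) (ω₁ ω₂ : Module.Dual ℂ (Mspace β k m)),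
      ω₁ ∈ ((Mspace β k m').comap (Mspace β k m).subtype).dualAnnihilator →
      ω₂ ∈ ((Mspace β k m').comap (Mspace β k m).subtype).dualAnnihilator →
      L.dualMap ω₁ = μ • ω₁ → L.dualMap ω₂ = μ • ω₂ → ω₁ ≠ 0 →
      ∃ c : ℂ, ω₂ = c • ω₁) := by
  obtain ⟨n, rfl⟩ := hdvd
  have hpn : 0 < m' * n := by omega
  have hd0 : d ≠ 0 := by omega
  obtain ⟨hz0, -, -⟩ := mem_Mspace_iff.mp hz
  have hw0 : ∀ j, tailWeight d k z j ≠ 0 :=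
    tailWeight_ne_zero hd0 (Fmap_fixed_succ hfix hz0 hd0) hz0 fun q hq hzq => by
      have := (hexact 0 q hq fun i _ => hzq i).1
      omega
  have hw : Periodic (tailWeight d k z) m' := tailWeight_periodic hper
  have hdual : ∀ b ∈ orthPeriodic (m' * n) m', L.dualMap (tailForm β k (m' * n) b) =
      tailForm β k (m' * n) (wshift (tailWeight d k z) b) := fun b hb =>
    dualMap_tailForm hk hβd hz hL hb.1 (by simpa using hb.2 1 fun _ => rfl)
  rw [Nat.mul_div_cancel_left n hm', hlam, ← weightProd_tailWeight]
  exact ⟨eigenvalues_annihilatorM hk hpn hw0 hw hdual,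
    span_eigenvectors_annihilatorM hk hpn hw0 hw hdual,
    fun μ ω₁ ω₂ => eigenvectors_annihilatorM_unique hk hpn hw0 hw hdual⟩

/-- at a fixed point of exact type `(k,m')` with `k ≥ 1` and `m'` a proper
divisor of `m`, the spectrum of the restriction of the transpose `(D_z F_{k,m})^*` to the
annihilator `ℳ_{k,m'}^0` equals `{μ : μ^m = λ^{m/m'} and μ^{m'} ≠ λ}`, where `λ` is the
multiplier of `P(t) = t^d + z_1` along the cycle of `P^{∘k}(0)`; moreover this restriction
is diagonalizable with simple eigenvalues. -/
theorem stmt19 (d : ℕ) (hd : 2 ≤ d) (β : ℂ) (hβd : β ^ d = 1) (hβ1 : β ≠ 1)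
    (k m m' : ℕ) (hk : 1 ≤ k) (hm : 1 ≤ m) (hm' : 1 ≤ m')
    (hdvd : m' ∣ m) (hne : m' ≠ m)
    (z : Eseq) (hz : z ∈ Mspace β k m) (hfix : Fmap β d k m z = z)
    (hper : ∀ i, k + 1 ≤ i → z (i + m') = z i)
    (hexact : ∀ a b : ℕ, 1 ≤ b → (∀ i, a + 1 ≤ i → z (i + b) = z i) → k ≤ a ∧ m' ≤ b)
    (lam : ℂ) (hlam : lam = ∏ i ∈ Finset.Icc 1 m', (d : ℂ) * z (k + i) ^ (d - 1))
    (L : Mspace β k m →ₗ[ℂ] Mspace β k m) (hL : IsDerivAt β d k m z L) :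
    ({μ : ℂ | ∃ ω ∈ ((Mspace β k m').comap (Mspace β k m).subtype).dualAnnihilator,
        ω ≠ 0 ∧ L.dualMap ω = μ • ω} =
      {μ : ℂ | μ ^ m = lam ^ (m / m') ∧ μ ^ m' ≠ lam}) ∧
    (Submodule.span ℂ {ω : Module.Dual ℂ (Mspace β k m) |
        ω ∈ ((Mspace β k m').comap (Mspace β k m).subtype).dualAnnihilator ∧
        ∃ μ : ℂ, L.dualMap ω = μ • ω} =
      ((Mspace β k m').comap (Mspace β k m).subtype).dualAnnihilator) ∧
    (∀ (μ : ℂ) (ω₁ ω₂ : Module.Dual ℂ (Mspace β k m)),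
      ω₁ ∈ ((Mspace β k m').comap (Mspace β k m).subtype).dualAnnihilator →
      ω₂ ∈ ((Mspace β k m').comap (Mspace β k m).subtype).dualAnnihilator →
      L.dualMap ω₁ = μ • ω₁ → L.dualMap ω₂ = μ • ω₂ → ω₁ ≠ 0 →
      ∃ c : ℂ, ω₂ = c • ω₁) :=
  stmt19_general d hd β hβd k m m' hk hm hm' hdvd z hz hfix hper hexact lam hlam L hL
end
end
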